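/- Let A = {00, 01, 10, 11} and let π : A^∞ → C² be the interleaving bijection π(ε₁δ₁, ε₂δ₂, ε₃δ₃, …) = (ε₁ε₂ε₃⋯, δ₁δ₂δ₃⋯). Then for every element f of the Brin–Thompson group 2V, the function f^π = π⁻¹ ∘ f ∘ π : A^∞ → A^∞ is a rational function. -/

import Mathlib

/-- The Cantor space of infinite binary sequences. -/
abbrev Cantor : Type := ℕ → Bool

/-- Concatenation of a finite binary string with an infinite binary sequence. -/
def cat (α : List Bool) (ω : Cantor) : Cantor := fun k =>
  if h : k < α.length then α.get ⟨k, h⟩ else ω (k - α.length)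

/-- The dyadic interval `I(α)`: all infinite binary sequences with prefix `α`. -/
def dyadicI (α : List Bool) : Set Cantor := Set.range (cat α)

/-- The dyadic rectangle `R(α, β) = I(α) × I(β)` in `C²`. -/
def rect (α β : List Bool) : Set (Cantor × Cantor) :=
  {p | (∃ ψ, p.1 = cat α ψ) ∧ ∃ ω, p.2 = cat β ω}

/-- A finite list of dyadic rectangles forms a dyadic subdivision of `C²`. -/
def IsSubdivision (L : List (List Bool × List Bool)) : Prop :=
  (⋃ r ∈ L, rect r.1 r.2) = Set.univ ∧
    List.Pairwise (fun r s => Disjoint (rect r.1 r.2) (rect s.1 s.2)) L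

/-- A numbered pattern pair for `2V`. -/
abbrev PatternPair : Type := List ((List Bool × List Bool) × (List Bool × List Bool))

/-- The numbered pattern pair `pp` represents the map `f`: domains and ranges each form
dyadic subdivisions, and `f` maps each domain rectangle to the corresponding range
rectangle by prefix replacement. -/
def Represents (pp : PatternPair) (f : Cantor × Cantor → Cantor × Cantor) : Prop :=
  IsSubdivision (pp.map Prod.fst) ∧ IsSubdivision (pp.map Prod.snd) ∧
    ∀ r ∈ pp, ∀ ψ ω : Cantor,
      f (cat r.1.1 ψ, cat r.1.2 ω) = (cat r.2.1 ψ, cat r.2.2 ω)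

/-- Membership in the Brin–Thompson group `2V`, viewed inside the permutation group of
`C²`: a homeomorphism acting by prefix replacements on the rectangles of some dyadic
subdivision. -/
def MemTwoV (f : Equiv.Perm (Cantor × Cantor)) : Prop :=
  Continuous ⇑f ∧ Continuous ⇑f.symm ∧ ∃ pp : PatternPair, Represents pp ⇑f


/-- An asynchronous transducer over the alphabet `A`: a finite set of states `S`, an
initial state, and a transition function giving, for each state and input letter, the
new state and the finite output word. -/
structure Transducer (A : Type) where
  /-- The set of states. -/
  S : Type
  /-- The set of states is finite. -/
  fin : Finite S
  /-- The initial state. -/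
  init : S
  /-- The transition function. -/
  step : S → A → S × List A

/-- The state sequence of the transducer on the infinite input string `x`. -/
def Transducer.states {A : Type} (T : Transducer A) (x : ℕ → A) : ℕ → T.S
  | 0 => T.init
  | k + 1 => (T.step (T.states x k) (x k)).1

/-- The finite output word produced at step `k` on input string `x`. -/
def Transducer.block {A : Type} (T : Transducer A) (x : ℕ → A) (k : ℕ) : List A :=
  (T.step (T.states x k) (x k)).2

/-- The concatenation of the output words produced during the first `k` steps:
a finite prefix of the output string. -/
def Transducer.outPrefix {A : Type} (T : Transducer A) (x : ℕ → A) (k : ℕ) : List A :=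
  ((List.range k).map (T.block x)).flatten

/-- The transducer is nondegenerate: every infinite input string produces an infinite
output string. -/
def Transducer.Nondegenerate {A : Type} (T : Transducer A) : Prop :=
  ∀ (x : ℕ → A) (k : ℕ), ∃ m, k ≤ (T.outPrefix x m).length

/-- `y` is the output string of the transducer on input string `x`: every finite prefix
of the produced output is a prefix of `y`. -/
def Transducer.IsOutput {A : Type} (T : Transducer A) (x y : ℕ → A) : Prop :=
  ∀ (k i : ℕ) (h : i < (T.outPrefix x k).length), y i = (T.outPrefix x k).get ⟨i, h⟩

/-- `f : A^∞ → A^∞` is a rational function: it is the input-output map of some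
nondegenerate asynchronous transducer. -/
def IsRational {A : Type} (f : (ℕ → A) → (ℕ → A)) : Prop :=
  ∃ T : Transducer A, T.Nondegenerate ∧ ∀ x, T.IsOutput x (f x)

/-- The interleaving bijection `π` from infinite strings over the four-letter alphabet
`A = {00, 01, 10, 11}` (pairs of binary digits) to `C²`:
`π(ε₁δ₁, ε₂δ₂, …) = (ε₁ε₂⋯, δ₁δ₂⋯)`. -/
def interleave : (ℕ → Bool × Bool) ≃ Cantor × Cantor where
  toFun x := (fun k => (x k).1, fun k => (x k).2)
  invFun p := fun k => (p.1 k, p.2 k)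
  left_inv _ := rfl
  right_inv _ := rfl

/-! Let `E` bound the lengths of all prefixes in a pattern pair for `f`. After `E` input
letters the domain rectangle `R(α, β)` containing the input is known, and letter `n` of the
first coordinate of the image is `γₙ` for `n < |γ|` and the input letter `n - |γ| + |α|`
otherwise, an index within `E` of `n` (likewise for the second coordinate with `β, δ`). So a
transducer that remembers the first `E` letters and the last `2E + 1` letters read, and emits
the image with a delay of `E` steps, computes `f^π`. -/

theorem List.take_append_singleton_take {A : Type} (l : List A) (a : A) (n : ℕ) :
    (l.take n ++ [a]).take n = (l ++ [a]).take n := by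
  rw [List.take_append, List.take_append, List.take_take, List.length_take]
  rcases le_total n l.length with h | h <;> simp [h]

theorem List.rtake_append_singleton_rtake {A : Type} (l : List A) (a : A) (n : ℕ) :
    (l.rtake n ++ [a]).rtake n = (l ++ [a]).rtake n := by
  cases n with
  | zero => simp
  | succ n => simp [List.rtake_eq_reverse_take_reverse, List.take_take]

theorem List.map_rtake {A B : Type} (f : A → B) (l : List A) (n : ℕ) :
    (l.rtake n).map f = (l.map f).rtake n := by
  simp [List.rtake, List.map_drop]

theorem cat_apply_add_length (α : List Bool) (ψ : Cantor) (i : ℕ) :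
    cat α ψ (i + α.length) = ψ i := by
  simp [cat]

theorem exists_eq_cat_iff_prefix {α : List Bool} {g : Cantor} {n : ℕ} (hn : α.length ≤ n) :
    (∃ ψ, g = cat α ψ) ↔ α <+: (List.range n).map g := by
  constructor
  · rintro ⟨ψ, rfl⟩
    rw [List.prefix_iff_eq_take]
    refine List.ext_getElem (by simp; omega) fun i h _ => ?_
    simp [cat, h]
  · intro h
    refine ⟨fun i => g (i + α.length), funext fun i => ?_⟩
    unfold cat
    split_ifs with hi
    · simpa using (h.getElem hi).symm
    · congr 1
      omega

/-- When `w` is the window of the last `2E + 1` letters after step `k ≥ E`, the position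
`w.length - 1 - E` is `min (k - E) E`: it is exact while `γ` is still being emitted, and
afterwards (`≥ E ≥ γ.length`) only its offset into the window matters. -/
def windowLetter (E : ℕ) (α γ w : List Bool) : Bool :=
  cat γ (fun i => w.getD (i + α.length) false) (w.length - 1 - E)

theorem windowLetter_rtake (g : Cantor) {α γ : List Bool} {E k : ℕ} (hα : α.length ≤ E)
    (hγ : γ.length ≤ E) (hk : E ≤ k) :
    windowLetter E α γ (((List.range (k + 1)).map g).rtake (2 * E + 1)) =
      cat γ (fun i => g (i + α.length)) (k - E) := by
  have hpos : ((List.range (k + 1)).map g).rtake (2 * E + 1) =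
      ((List.range (k + 1)).map g).drop (k + 1 - (2 * E + 1)) := by simp [List.rtake]
  have hp : k + 1 - (k + 1 - (2 * E + 1)) - 1 - E = min (k - E) E := by omega
  simp only [windowLetter, hpos, List.length_drop, List.length_map, List.length_range, hp]
  unfold cat
  split_ifs with h₁ h₂ h₂
  · simp only [List.get_eq_getElem]
    congr 1
    omega
  · omega
  · omega
  · beta_reduce
    rw [List.getD_eq_getElem _ _ (by simp; omega)]
    simp only [List.getElem_drop, List.getElem_map, List.getElem_range]
    congr 1
    omega

namespace Transducer

variable {A : Type}

theorem outPrefix_succ (T : Transducer A) (x : ℕ → A) (k : ℕ) :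
    T.outPrefix x (k + 1) = T.outPrefix x k ++ T.block x k := by
  simp [outPrefix, List.range_succ]

theorem outPrefix_eq_of_block_eq {T : Transducer A} {x y : ℕ → A} {E : ℕ}
    (h : ∀ k, T.block x k = if E ≤ k then [y (k - E)] else []) (k : ℕ) :
    T.outPrefix x k = (List.range (k - E)).map y := by
  induction k with
  | zero => simp [outPrefix]
  | succ k ih =>
    rw [outPrefix_succ, ih, h]
    split_ifs with hk
    · rw [show k + 1 - E = k - E + 1 by omega, List.range_succ, List.map_append]
      rfl
    · rw [show k + 1 - E = k - E by omega, List.append_nil]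

end Transducer

theorem isRational_of_block_eq {A : Type} (T : Transducer A) (E : ℕ)
    (F : (ℕ → A) → ℕ → A)
    (h : ∀ x k, T.block x k = if E ≤ k then [F x (k - E)] else []) :
    IsRational F :=
  ⟨T, fun x k => ⟨k + E, by simp [Transducer.outPrefix_eq_of_block_eq (h x)]⟩,
    fun x k i hi => by simp [Transducer.outPrefix_eq_of_block_eq (h x)]⟩

section Window

variable {A : Type} [Finite A]

def windowTransducer (H W : ℕ) (out : List A → List A → List A) : Transducer A where
  S := {l : List A // l.length ≤ H} × {l : List A // l.length ≤ W}
  fin := by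
    have : Finite {l : List A // l.length ≤ H} := (List.finite_length_le A H).to_subtype
    have : Finite {l : List A // l.length ≤ W} := (List.finite_length_le A W).to_subtype
    infer_instance
  init := (⟨[], Nat.zero_le _⟩, ⟨[], Nat.zero_le _⟩)
  step s a :=
    ((⟨(s.1.1 ++ [a]).take H, List.length_take_le _ _⟩,
      ⟨(s.2.1 ++ [a]).rtake W, by simp only [List.rtake, List.length_drop]; omega⟩),
     out ((s.1.1 ++ [a]).take H) ((s.2.1 ++ [a]).rtake W))

variable {H W : ℕ} {out : List A → List A → List A}

theorem windowTransducer_states (x : ℕ → A) (k : ℕ) :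
    (Prod.fst ((windowTransducer H W out).states x k)).val =
        ((List.range k).map x).take H ∧
      (Prod.snd ((windowTransducer H W out).states x k)).val =
        ((List.range k).map x).rtake W := by
  induction k with
  | zero => simp [Transducer.states, windowTransducer]
  | succ k ih =>
    simp only [Transducer.states, windowTransducer] at ih ⊢
    simp only [ih.1, ih.2, List.range_succ, List.map_append, List.map_singleton,
      List.take_append_singleton_take, List.rtake_append_singleton_rtake, and_self]

theorem windowTransducer_block (x : ℕ → A) (k : ℕ) :
    (windowTransducer H W out).block x k =
      out (((List.range (k + 1)).map x).take H) (((List.range (k + 1)).map x).rtake W) := by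
  have h := windowTransducer_states (H := H) (W := W) (out := out) x k
  simp only [Transducer.block, windowTransducer] at h ⊢
  simp only [h.1, h.2, List.range_succ, List.map_append, List.map_singleton,
    List.take_append_singleton_take, List.rtake_append_singleton_rtake]

end Window

def domainMatches (h : List (Bool × Bool))
    (r : (List Bool × List Bool) × (List Bool × List Bool)) : Bool :=
  r.1.1.isPrefixOf (h.map Prod.fst) && r.1.2.isPrefixOf (h.map Prod.snd)

def prefixReplacementOut (pp : PatternPair) (E : ℕ) (h w : List (Bool × Bool)) :
    List (Bool × Bool) :=
  if w.length ≤ E then []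
  else
    match pp.find? (domainMatches h) with
    | none => []
    | some r => [(windowLetter E r.1.1 r.2.1 (w.map Prod.fst),
        windowLetter E r.1.2 r.2.2 (w.map Prod.snd))]

theorem interleave_mem_rect_iff {r : (List Bool × List Bool) × (List Bool × List Bool)}
    {x : ℕ → Bool × Bool} {n : ℕ} (hα : r.1.1.length ≤ n) (hβ : r.1.2.length ≤ n) :
    interleave x ∈ rect r.1.1 r.1.2 ↔ domainMatches ((List.range n).map x) r = true := by
  simp only [rect, domainMatches, Set.mem_ofPred_eq, Bool.and_eq_true,
    List.isPrefixOf_iff_prefix, List.map_map]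
  exact and_congr (exists_eq_cat_iff_prefix hα) (exists_eq_cat_iff_prefix hβ)

theorem windowTransducer_prefixReplacementOut_block {pp : PatternPair} {E : ℕ}
    {f : Cantor × Cantor → Cantor × Cantor}
    (hcov : ∀ p, ∃ r ∈ pp, p ∈ rect r.1.1 r.1.2)
    (hmap : ∀ r ∈ pp, ∀ ψ ω : Cantor,
      f (cat r.1.1 ψ, cat r.1.2 ω) = (cat r.2.1 ψ, cat r.2.2 ω))
    (hE : ∀ r ∈ pp,
      r.1.1.length ≤ E ∧ r.1.2.length ≤ E ∧ r.2.1.length ≤ E ∧ r.2.2.length ≤ E)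
    (x : ℕ → Bool × Bool) (k : ℕ) :
    (windowTransducer E (2 * E + 1) (prefixReplacementOut pp E)).block x k =
      if E ≤ k then [(interleave.symm ∘ f ∘ interleave) x (k - E)] else [] := by
  have hlen : (((List.range (k + 1)).map x).rtake (2 * E + 1)).length =
      min (k + 1) (2 * E + 1) := by
    simp [List.rtake]; omega
  rw [windowTransducer_block, prefixReplacementOut]
  by_cases hk : E ≤ k
  swap
  · rw [if_pos (by omega), if_neg hk]
  rw [if_neg (by omega), if_pos hk, ← List.map_take, List.take_range, min_eq_left (by omega)]
  obtain ⟨r₀, hr₀, hx₀⟩ := hcov (interleave x)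
  obtain ⟨r, hfind⟩ := Option.isSome_iff_exists.mp <| List.find?_isSome.mpr
    ⟨r₀, hr₀, (interleave_mem_rect_iff (hE r₀ hr₀).1 (hE r₀ hr₀).2.1).mp hx₀⟩
  have hr := List.mem_of_find?_eq_some hfind
  obtain ⟨hα, hβ, hγ, hδ⟩ := hE r hr
  obtain ⟨⟨ψ, hψ⟩, ⟨ω, hω⟩⟩ :=
    (interleave_mem_rect_iff hα hβ).mpr (List.find?_some hfind)
  have himage : f (interleave x) = (cat r.2.1 ψ, cat r.2.2 ω) := by
    rw [← hmap r hr, ← hψ, ← hω]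
  have hshift₁ : (fun i => (x (i + r.1.1.length)).1) = ψ :=
    funext fun i => (congrFun hψ (i + r.1.1.length)).trans (cat_apply_add_length _ _ _)
  have hshift₂ : (fun i => (x (i + r.1.2.length)).2) = ω :=
    funext fun i => (congrFun hω (i + r.1.2.length)).trans (cat_apply_add_length _ _ _)
  rw [hfind]
  simp only [List.map_rtake, List.map_map]
  rw [windowLetter_rtake _ hα hγ hk, windowLetter_rtake _ hβ hδ hk]
  simp only [Function.comp_apply, hshift₁, hshift₂, himage]
  rfl

theorem exists_pattern_length_le (pp : PatternPair) :
    ∃ E, ∀ r ∈ pp,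
      r.1.1.length ≤ E ∧ r.1.2.length ≤ E ∧ r.2.1.length ≤ E ∧ r.2.2.length ≤ E := by
  refine ⟨(pp.map fun r => r.1.1.length + r.1.2.length + r.2.1.length + r.2.2.length).sum,
    fun r hr => ?_⟩
  have := List.le_sum_of_mem (List.mem_map_of_mem
    (f := fun r => r.1.1.length + r.1.2.length + r.2.1.length + r.2.2.length) hr)
  omega

theorem isRational_interleave_conj_of_prefixReplacement (pp : PatternPair)
    (f : Cantor × Cantor → Cantor × Cantor) (hcov : ∀ p, ∃ r ∈ pp, p ∈ rect r.1.1 r.1.2)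
    (hmap : ∀ r ∈ pp, ∀ ψ ω : Cantor,
      f (cat r.1.1 ψ, cat r.1.2 ω) = (cat r.2.1 ψ, cat r.2.2 ω)) :
    IsRational (⇑interleave.symm ∘ f ∘ ⇑interleave) := by
  obtain ⟨E, hE⟩ := exists_pattern_length_le pp
  exact isRational_of_block_eq _ E _ (windowTransducer_prefixReplacementOut_block hcov hmap hE)

/-- For every element `f` of the Brin–Thompson group `2V`, the conjugate
`f^π = π⁻¹ ∘ f ∘ π` by the interleaving bijection is a rational function on the
infinite strings over the four-letter alphabet `{00, 01, 10, 11}`. -/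
theorem element_of_2V_is_rational (f : Equiv.Perm (Cantor × Cantor)) (hf : MemTwoV f) :
    IsRational (⇑interleave.symm ∘ ⇑f ∘ ⇑interleave) := by
  obtain ⟨-, -, pp, ⟨hcov, -⟩, -, hmap⟩ := hf
  refine isRational_interleave_conj_of_prefixReplacement pp f (fun p => ?_) hmap
  have hp : p ∈ ⋃ r ∈ pp.map Prod.fst, rect r.1 r.2 := hcov ▸ Set.mem_univ p
  simp only [Set.mem_iUnion, List.mem_map, exists_prop] at hp
  obtain ⟨_, ⟨r, hr, rfl⟩, hp⟩ := hp
  exact ⟨r, hr, hp⟩
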